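/- Suppose f(x) = (1/n) Σ_{i=1}^n f_i(x) is β-smooth and μ-PL with β ≥ μ > 0, each f_i is differentiable with ‖∇f_i(x)‖ ≤ σ for all i and x, and c ≥ n·ln(2)/r. Consider the iteration x_{t+1} = x_t - ((1-p)/β) ĝ(x_t), where ĝ(x) = g(x)/(1-p), g(x) = (1/n) Σ_{i=1}^{n/c} Y_i^{(t)} g[i](x), g[i](x) = Σ_{j=1}^c ∇f_{c(i-1)+j}(x), and at each iteration the block indicators Y^{(t)} are induced by an independent uniformly random r-subset of the k workers (partitioned into n/c blocks of size ℓ = kc/n, 2ℓ ≤ k). Then Δ_T := E[f(x_T) - f*] satisfies Δ_T ≤ (1 - (1-e^{-cr/n})μ/β)^T Δ_0 + 2c·e^{-cr/n}σ²/(μn). -/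

import Mathlib

open Finset

/-- The index `c*(i-1)+j` (0-indexed: `c*i + j`) of the `j`-th task in the `i`-th block. -/
def taskIdx (n c : ℕ) (hc : c ∣ n) (i : Fin (n / c)) (j : Fin c) : Fin n :=
  ⟨c * i.val + j.val, by
    calc c * i.val + j.val < c * i.val + c := Nat.add_lt_add_left j.isLt _
      _ = c * (i.val + 1) := (Nat.mul_succ c i.val).symm
      _ ≤ c * (n / c) := Nat.mul_le_mul (Nat.le_refl c) i.isLt
      _ = n := Nat.mul_div_cancel' hc⟩

/-- The trajectory obtained by starting at `x0` and, at step `t`, applying the update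
`upd (ω t)` determined by the non-straggler set `ω t` of that iteration. -/
def traj {k : ℕ} {E : Type*} (x0 : E) (upd : Finset (Fin k) → E → E)
    (ω : ℕ → Finset (Fin k)) : ℕ → E
  | 0 => x0
  | t + 1 => upd (ω t) (traj x0 upd ω t)

/-!
Write `v = ∇F x` and let `e` be `1/n` times the sum of the block gradients `g[i](x)` of the
blocks without a non-straggler, so that one step moves from `x` to `x - β⁻¹ (v - e)`.
Smoothness gives `F (x - β⁻¹ (v - e)) ≤ F x - ‖v‖² / (2β) + ‖e‖² / (2β)`. A block is missed with
probability `p` and two disjoint blocks together with probability `q ≤ p`, so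
`E ‖e‖² = q ‖v‖² + (p - q) n⁻² ∑ ‖g[i]‖² ≤ p ‖v‖² + p c σ² / n`. With the PL inequality this is
the one-step contraction `E [F - f*] ≤ (1 - (1 - p) μ / β) (F x - f*) + p c σ² / (2 β n)`, which
iterates over the independent rounds. Finally `p ≤ (1 - ℓ / k) ^ r ≤ e^{-cr/n} ≤ 1/2`, because
`ℓ / k = c / n` and `c r / n ≥ ln 2`.
-/

open scoped BigOperators RealInnerProductSpace
open Real

theorem Nat.descFactorial_sub_mul_pow_le (k ℓ r : ℕ) :
    (k - ℓ).descFactorial r * k ^ r ≤ k.descFactorial r * (k - ℓ) ^ r := by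
  have hpow (m : ℕ) : m ^ r = ∏ _i ∈ range r, m := by simp
  rw [Nat.descFactorial_eq_prod_range, Nat.descFactorial_eq_prod_range, hpow, hpow,
    ← prod_mul_distrib, ← prod_mul_distrib]
  refine prod_le_prod' fun i _ => ?_
  rcases le_total k (ℓ + i) with h | h
  · simp [show k - ℓ - i = 0 by omega]
  · zify [h, (by omega : ℓ ≤ k), (by omega : i ≤ k), (by omega : i ≤ k - ℓ)]
    nlinarith

theorem Nat.choose_sub_div_choose_le_exp {k ℓ r : ℕ} (hk : 0 < k) (hℓ : ℓ ≤ k) (hr : r ≤ k) :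
    ((k - ℓ).choose r : ℝ) / k.choose r ≤ exp (-(ℓ / k * r)) := by
  have hkR : (0 : ℝ) < k := by exact_mod_cast hk
  have hchoose : ((k - ℓ).choose r : ℝ) * k ^ r ≤ k.choose r * (k - ℓ) ^ r := by
    have h := Nat.descFactorial_sub_mul_pow_le k ℓ r
    rw [Nat.descFactorial_eq_factorial_mul_choose, Nat.descFactorial_eq_factorial_mul_choose,
      mul_assoc, mul_assoc, Nat.mul_le_mul_left_iff r.factorial_pos] at h
    have hR := (Nat.cast_le (α := ℝ)).2 h
    push_cast [Nat.cast_sub hℓ] at hR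
    exact hR
  calc ((k - ℓ).choose r : ℝ) / k.choose r ≤ (1 - ℓ / k) ^ r := by
        rw [one_sub_div hkR.ne', div_pow, div_le_div_iff₀ (by exact_mod_cast Nat.choose_pos hr)
          (by positivity)]
        linarith
    _ ≤ exp (-(ℓ / k)) ^ r := by
        gcongr
        · rw [sub_nonneg, div_le_one hkR]; exact_mod_cast hℓ
        · exact one_sub_le_exp_neg _
    _ = exp (-(ℓ / k * r)) := by rw [← exp_nat_mul]; ring_nf

theorem Real.exp_neg_mul_div_le_half {c n r : ℝ} (hn : 0 < n) (hr : 0 < r)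
    (h : n * log 2 / r ≤ c) : exp (-(c * r) / n) ≤ 1 / 2 := by
  have hlog : log 2 ≤ c * r / n := by
    rw [div_le_iff₀ hr] at h
    rw [le_div_iff₀ hn]
    linarith
  calc exp (-(c * r) / n) ≤ exp (-log 2) := exp_le_exp.2 (by rw [neg_div]; linarith)
    _ = 1 / 2 := by rw [exp_neg, exp_log two_pos, one_div]

theorem choose_sub_div_choose_le_exp_of_mul_eq {n k c r ℓ : ℕ} (hn : 0 < n) (hc : c ∣ n)
    (hrpos : 0 < r) (hr : r ≤ k) (hℓ : n * ℓ = k * c) :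
    ((k - ℓ).choose r : ℝ) / k.choose r ≤ exp (-(c * r) / n) := by
  have hk : 0 < k := hrpos.trans_le hr
  have hℓk : ℓ ≤ k := Nat.le_of_mul_le_mul_left
    (by rw [hℓ, mul_comm n]; exact Nat.mul_le_mul_left k (Nat.le_of_dvd hn hc)) hn
  have hratio : (ℓ : ℝ) / k = c / n := by
    rw [div_eq_div_iff (by positivity) (by positivity)]
    exact_mod_cast (by rw [mul_comm, hℓ, mul_comm] : ℓ * n = c * k)
  calc _ ≤ exp (-(ℓ / k * r)) := Nat.choose_sub_div_choose_le_exp hk hℓk hr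
    _ = exp (-(c * r) / n) := by rw [hratio, neg_div, div_mul_eq_mul_div]

theorem Finset.expect_powersetCard_disjoint {α : Type*} [Fintype α] [DecidableEq α]
    (r : ℕ) (U : Finset α) :
    𝔼 s ∈ powersetCard r univ, (if Disjoint s U then (1 : ℝ) else 0)
      = ((Fintype.card α - #U).choose r : ℝ) / (Fintype.card α).choose r := by
  have hfilter : {s ∈ powersetCard r (univ : Finset α) | Disjoint s U} = powersetCard r Uᶜ := by
    ext s
    simp [mem_powersetCard, subset_compl_iff_disjoint_right, and_comm]
  rw [expect_eq_sum_div_card, sum_boole, hfilter, card_powersetCard, card_powersetCard,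
    card_compl, card_univ]

theorem expect_norm_sq_sum_smul {ι κ E : Type*} [Fintype ι] [DecidableEq ι]
    [NormedAddCommGroup E] [InnerProductSpace ℝ E]
    (S : Finset κ) (Z : κ → ι → ℝ) (G : ι → E) (a b : ℝ)
    (hZ : ∀ i j, 𝔼 s ∈ S, Z s i * Z s j = a + if i = j then b else 0) :
    𝔼 s ∈ S, ‖∑ i, Z s i • G i‖ ^ 2 = a * ‖∑ i, G i‖ ^ 2 + b * ∑ i, ‖G i‖ ^ 2 := by
  have hexpand (w : ι → ℝ) : ‖∑ i, w i • G i‖ ^ 2 = ∑ i, ∑ j, w i * w j * ⟪G i, G j⟫ := by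
    simp only [← real_inner_self_eq_norm_sq, sum_inner, inner_sum, real_inner_smul_left,
      real_inner_smul_right, mul_assoc]
    exact sum_congr rfl fun i _ => sum_congr rfl fun j _ => by rw [real_inner_comm]
  have hone := hexpand 1
  simp only [Pi.one_apply, one_smul, one_mul] at hone
  simp only [hexpand, expect_sum_comm, ← expect_mul, hZ, add_mul, ite_mul, zero_mul,
    sum_add_distrib, sum_ite_eq, mem_univ, if_true, ← mul_sum, hone, real_inner_self_eq_norm_sq]

theorem apply_sub_inv_smul_le_of_smooth {E : Type*} [NormedAddCommGroup E] [InnerProductSpace ℝ E]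
    {F : E → ℝ} {x v : E} {β : ℝ} (hβ : 0 < β)
    (hsmooth : ∀ y, F y ≤ F x + ⟪v, y - x⟫ + β / 2 * ‖y - x‖ ^ 2) (g : E) :
    F (x - β⁻¹ • g) ≤ F x - ‖v‖ ^ 2 / (2 * β) + ‖v - g‖ ^ 2 / (2 * β) := by
  have h := hsmooth (x - β⁻¹ • g)
  rw [sub_sub_cancel_left, inner_neg_right, real_inner_smul_right, norm_neg, norm_smul,
    Real.norm_eq_abs, abs_of_pos (inv_pos.2 hβ)] at h
  have hsq := norm_sub_sq_real v g
  calc F (x - β⁻¹ • g) ≤ F x + -(β⁻¹ * ⟪v, g⟫) + β / 2 * (β⁻¹ * ‖g‖) ^ 2 := h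
    _ = _ := by rw [hsq]; field_simp; ring

theorem sum_taskIdx {n c : ℕ} (hc : c ∣ n) {M : Type*} [AddCommMonoid M] (g : Fin n → M) :
    ∑ i, ∑ j, g (taskIdx n c hc i j) = ∑ t, g t := by
  rw [← Fintype.sum_prod_type']
  refine Fintype.sum_equiv (finProdFinEquiv.trans (finCongr (Nat.div_mul_cancel hc))) _ _ ?_
  intro q
  congr 1
  ext
  simp [taskIdx, finProdFinEquiv, add_comm]

theorem gradient_const_mul_sum {ι E : Type*} [Fintype ι] [NormedAddCommGroup E]
    [InnerProductSpace ℝ E] [CompleteSpace E] {f : ι → E → ℝ} {x : E}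
    (hf : ∀ i, DifferentiableAt ℝ (f i) x) (a : ℝ) :
    gradient (fun y => a * ∑ i, f i y) x = a • ∑ i, gradient (f i) x := by
  have hderiv : HasFDerivAt (fun y => a * ∑ i, f i y) (a • ∑ i, fderiv ℝ (f i) x) x :=
    (HasFDerivAt.fun_sum fun i _ => (hf i).hasFDerivAt).const_mul a
  rw [hderiv.hasGradientAt.gradient, map_smul, map_sum]
  rfl

theorem le_pow_mul_add_of_le_mul_add_one_sub_mul {a : ℕ → ℝ} {ρ C : ℝ} (hρ : 0 ≤ ρ) (hC : 0 ≤ C)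
    (h : ∀ t, a (t + 1) ≤ ρ * a t + (1 - ρ) * C) (T : ℕ) : a T ≤ ρ ^ T * a 0 + C := by
  suffices a T - C ≤ ρ ^ T * (a 0 - C) by nlinarith [pow_nonneg hρ T]
  induction T with
  | zero => simp
  | succ t ih =>
    calc a (t + 1) - C ≤ ρ * (a t - C) := by linarith [h t]
      _ ≤ ρ * (ρ ^ t * (a 0 - C)) := by gcongr
      _ = ρ ^ (t + 1) * (a 0 - C) := by ring

section Trajectory

variable {k : ℕ} {E : Type*} (x0 : E) (upd : Finset (Fin k) → E → E)

theorem traj_congr {ω ω' : ℕ → Finset (Fin k)} {T : ℕ} (h : ∀ t < T, ω t = ω' t) :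
    traj x0 upd ω T = traj x0 upd ω' T := by
  induction T with
  | zero => rfl
  | succ t ih => rw [traj, traj, h t t.lt_succ_self, ih fun s hs => h s (by omega)]

theorem expect_traj_succ {M : Type*} [AddCommMonoid M] [Module ℚ≥0 M]
    (Ω : Finset (Finset (Fin k))) (φ : E → M) (T : ℕ) :
    𝔼 ω ∈ Fintype.piFinset (fun _ : Fin (T + 1) => Ω),
        φ (traj x0 upd (fun t => if h : t < T + 1 then ω ⟨t, h⟩ else ∅) (T + 1))
      = 𝔼 ω ∈ Fintype.piFinset (fun _ : Fin T => Ω), 𝔼 s ∈ Ω,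
        φ (upd s (traj x0 upd (fun t => if h : t < T then ω ⟨t, h⟩ else ∅) T)) := by
  rw [expect_comm, ← expect_product']
  refine (expect_equiv (Fin.snocEquiv fun _ => Finset (Fin k)) (fun q => ?_) fun q _ => ?_).symm
  · simp [Fin.snocEquiv, Fin.forall_fin_succ', and_comm]
  · simp only [Fin.snocEquiv, Equiv.coe_fn_mk]
    rw [traj, dif_pos T.lt_succ_self]
    congr 2
    · exact (Fin.snoc_last (α := fun _ => Finset (Fin k)) _ _).symm
    · refine traj_congr x0 upd fun t ht => ?_
      rw [dif_pos (show t < T + 1 by omega), dif_pos ht]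
      exact (Fin.snoc_castSucc (α := fun _ => Finset (Fin k)) (i := ⟨t, ht⟩) _ _).symm

theorem expect_traj_le (Ω : Finset (Finset (Fin k))) (hΩ : Ω.Nonempty) (D : E → ℝ) {ρ C : ℝ}
    (hρ : 0 ≤ ρ) (hC : 0 ≤ C) (hstep : ∀ x, 𝔼 s ∈ Ω, D (upd s x) ≤ ρ * D x + (1 - ρ) * C)
    (T : ℕ) :
    𝔼 ω ∈ Fintype.piFinset (fun _ : Fin T => Ω),
        D (traj x0 upd (fun t => if h : t < T then ω ⟨t, h⟩ else ∅) T)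
      ≤ ρ ^ T * D x0 + C := by
  refine (le_pow_mul_add_of_le_mul_add_one_sub_mul (a := fun T => 𝔼 ω ∈ Fintype.piFinset
    (fun _ : Fin T => Ω), D (traj x0 upd (fun t => if h : t < T then ω ⟨t, h⟩ else ∅) T))
    hρ hC (fun t => ?_) T).trans_eq ?_
  · rw [expect_traj_succ]
    calc _ ≤ 𝔼 ω ∈ Fintype.piFinset (fun _ : Fin t => Ω),
          (ρ * D (traj x0 upd (fun s => if h : s < t then ω ⟨s, h⟩ else ∅) t) + (1 - ρ) * C) :=
          expect_le_expect fun ω _ => hstep _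
      _ = _ := by rw [expect_add_distrib, ← mul_expect, expect_const hΩ.piFinset_const]
  · simp [traj]

end Trajectory

section ErasureHead

variable {k ℓ r m : ℕ} {W : Fin m → Finset (Fin k)}

theorem expect_disjoint_mul_disjoint (hWcard : ∀ i, #(W i) = ℓ)
    (hWdisj : ∀ i j, i ≠ j → Disjoint (W i) (W j)) (i j : Fin m) :
    𝔼 s ∈ powersetCard r univ,
        (if Disjoint s (W i) then (1 : ℝ) else 0) * (if Disjoint s (W j) then 1 else 0)
      = ((k - 2 * ℓ).choose r : ℝ) / k.choose r
        + if i = j then (((k - ℓ).choose r : ℝ) - (k - 2 * ℓ).choose r) / k.choose r else 0 := by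
  have hunion (s : Finset (Fin k)) :
      (if Disjoint s (W i) then (1 : ℝ) else 0) * (if Disjoint s (W j) then 1 else 0)
        = if Disjoint s (W i ∪ W j) then 1 else 0 := by
    simp only [disjoint_union_right, ite_zero_mul_ite_zero, mul_one]
  simp only [hunion, expect_powersetCard_disjoint, Fintype.card_fin]
  by_cases hij : i = j
  · subst hij
    rw [union_self, hWcard, if_pos rfl]
    ring
  · rw [card_union_of_disjoint (hWdisj i j hij), hWcard, hWcard, if_neg hij, two_mul, add_zero]

theorem expect_norm_sq_sum_disjoint_smul_le {E : Type*} [NormedAddCommGroup E]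
    [InnerProductSpace ℝ E] (hWcard : ∀ i, #(W i) = ℓ)
    (hWdisj : ∀ i j, i ≠ j → Disjoint (W i) (W j)) (G : Fin m → E) :
    𝔼 s ∈ powersetCard r univ, ‖∑ i, (if Disjoint s (W i) then (1 : ℝ) else 0) • G i‖ ^ 2
      ≤ ((k - ℓ).choose r : ℝ) / k.choose r * (‖∑ i, G i‖ ^ 2 + ∑ i, ‖G i‖ ^ 2) := by
  rw [expect_norm_sq_sum_smul _ _ _ _ _ (expect_disjoint_mul_disjoint hWcard hWdisj)]
  have hq : ((k - 2 * ℓ).choose r : ℝ) / k.choose r ≤ ((k - ℓ).choose r : ℝ) / k.choose r := by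
    have h : (k - 2 * ℓ).choose r ≤ (k - ℓ).choose r := Nat.choose_le_choose r (by omega)
    gcongr
  have hq0 : (0 : ℝ) ≤ ((k - 2 * ℓ).choose r : ℝ) / k.choose r := by positivity
  have hA := sq_nonneg ‖∑ i, G i‖
  have hB : 0 ≤ ∑ i, ‖G i‖ ^ 2 := sum_nonneg fun i _ => sq_nonneg _
  rw [sub_div]
  nlinarith

theorem expect_sub_erasureHead_step_le {E : Type*} [NormedAddCommGroup E]
    [InnerProductSpace ℝ E] (hWcard : ∀ i, #(W i) = ℓ)
    (hWdisj : ∀ i j, i ≠ j → Disjoint (W i) (W j)) (hr : r ≤ k) {n c : ℕ}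
    (hmc : m * c = n) {F : E → ℝ} {x v : E} {G : Fin m → E} {β μ σ fstar p : ℝ} (hβ : 0 < β)
    (hp : p = ((k - ℓ).choose r : ℝ) / k.choose r) (hv : v = (1 / (n : ℝ)) • ∑ i, G i)
    (hG : ∀ i, ‖G i‖ ≤ c * σ)
    (hsmooth : ∀ y, F y ≤ F x + ⟪v, y - x⟫ + β / 2 * ‖y - x‖ ^ 2)
    (hPL : μ * (F x - fstar) ≤ 1 / 2 * ‖v‖ ^ 2) :
    𝔼 s ∈ powersetCard r univ, (F (x - β⁻¹ • ((1 / (n : ℝ)) • ∑ i,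
        (if (s ∩ W i).Nonempty then (1 : ℝ) else 0) • G i)) - fstar)
      ≤ (1 - (1 - p) * μ / β) * (F x - fstar) + p * (c * σ ^ 2 / n) / (2 * β) := by
  set e : Finset (Fin k) → E := fun s =>
    (1 / (n : ℝ)) • ∑ i, (if Disjoint s (W i) then (1 : ℝ) else 0) • G i
  have hresidual (s : Finset (Fin k)) :
      v - (1 / (n : ℝ)) • ∑ i, (if (s ∩ W i).Nonempty then (1 : ℝ) else 0) • G i = e s := by
    rw [hv, ← smul_sub, ← sum_sub_distrib]
    congr 2 with i
    by_cases h : Disjoint s (W i) <;> simp [h, ← not_disjoint_iff_nonempty_inter]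
  have hnoise : 𝔼 s ∈ powersetCard r univ, ‖e s‖ ^ 2 ≤ p * ‖v‖ ^ 2 + p * (c * σ ^ 2 / n) := by
    have hblocks : ∑ i, ‖G i‖ ^ 2 ≤ n * c * σ ^ 2 := by
      calc ∑ i, ‖G i‖ ^ 2 ≤ ∑ _i : Fin m, (c * σ) ^ 2 :=
            sum_le_sum fun i _ => pow_le_pow_left₀ (norm_nonneg _) (hG i) 2
        _ = n * c * σ ^ 2 := by simp [← hmc]; ring
    simp only [e, norm_smul, mul_pow, ← mul_expect]
    calc _ ≤ ‖1 / (n : ℝ)‖ ^ 2 * (p * (‖∑ i, G i‖ ^ 2 + n * c * σ ^ 2)) := by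
          gcongr
          rw [hp]
          exact (expect_norm_sq_sum_disjoint_smul_le hWcard hWdisj G).trans (by gcongr)
      _ = p * ‖v‖ ^ 2 + p * (c * σ ^ 2 / n) := by
          rw [hv, norm_smul, norm_div, norm_one, Real.norm_natCast]
          field_simp
  have hp1 : p ≤ 1 := by
    rw [hp]
    exact div_le_one_of_le₀ (by exact_mod_cast Nat.choose_le_choose r (Nat.sub_le k ℓ))
      (Nat.cast_nonneg _)
  have hΩ : (powersetCard r (univ : Finset (Fin k))).Nonempty := by simpa using hr
  calc _ ≤ 𝔼 s ∈ powersetCard r univ,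
        (F x - fstar - ‖v‖ ^ 2 / (2 * β) + ‖e s‖ ^ 2 / (2 * β)) := by
        refine expect_le_expect fun s _ => ?_
        have := apply_sub_inv_smul_le_of_smooth hβ hsmooth
          ((1 / (n : ℝ)) • ∑ i, (if (s ∩ W i).Nonempty then (1 : ℝ) else 0) • G i)
        rw [hresidual] at this
        linarith
    _ = F x - fstar - ‖v‖ ^ 2 / (2 * β)
        + (𝔼 s ∈ powersetCard r univ, ‖e s‖ ^ 2) / (2 * β) := by
        rw [expect_add_distrib, expect_const hΩ, expect_div]
    _ ≤ F x - fstar - ‖v‖ ^ 2 / (2 * β) + (p * ‖v‖ ^ 2 + p * (c * σ ^ 2 / n)) / (2 * β) := by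
        gcongr
    _ = F x - fstar - (1 - p) * (1 / 2 * ‖v‖ ^ 2) / β + p * (c * σ ^ 2 / n) / (2 * β) := by
        ring
    _ ≤ F x - fstar - (1 - p) * (μ * (F x - fstar)) / β + p * (c * σ ^ 2 / n) / (2 * β) := by
        gcongr
    _ = _ := by ring

end ErasureHead

-- The right side is `ρ A + (1 - ρ) C` with `ρ = 1 - (1 - ε) μ / β` and fixed point `C = 2 ε N / μ`.
theorem erasure_step_bound_mono {p ε μ β A N : ℝ} (hpε : p ≤ ε) (hε0 : 0 ≤ ε) (hε : ε ≤ 1 / 2)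
    (hμ : 0 < μ) (hβ : 0 < β) (hA : 0 ≤ A) (hN : 0 ≤ N) :
    (1 - (1 - p) * μ / β) * A + p * N / (2 * β)
      ≤ (1 - (1 - ε) * μ / β) * A + (1 - (1 - (1 - ε) * μ / β)) * (2 * ε * N / μ) := by
  have hnoise :
      (1 - (1 - (1 - ε) * μ / β)) * (2 * ε * N / μ) = 4 * (1 - ε) * ε * (N / (2 * β)) := by
    field_simp
    ring
  rw [hnoise, mul_div_assoc p]
  gcongr ?_ * _ + ?_ * _
  · gcongr
  · nlinarith

theorem erasurehead_convergence_exp_bound_step_one_sub_p_over_beta_general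
    {d n k c r ℓ T : ℕ} (hn : 0 < n) (hc : c ∣ n) (hrpos : 0 < r)
    (hr : r ≤ k) (hℓ : n * ℓ = k * c)
    (hcr : (c : ℝ) ≥ (n : ℝ) * Real.log 2 / (r : ℝ))
    (W : Fin (n / c) → Finset (Fin k))
    (hWcard : ∀ i, (W i).card = ℓ)
    (hWdisj : ∀ i j, i ≠ j → Disjoint (W i) (W j))
    (f : Fin n → EuclideanSpace ℝ (Fin d) → ℝ)
    (hdiff : ∀ i, Differentiable ℝ (f i))
    (σ β μ fstar : ℝ) (hμ : 0 < μ) (hβμ : μ ≤ β)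
    (hσ : ∀ i x, ‖gradient (f i) x‖ ≤ σ)
    (F : EuclideanSpace ℝ (Fin d) → ℝ)
    (hF : F = fun y => (1 / (n : ℝ)) * ∑ i, f i y)
    (hsmooth : ∀ x y, F y ≤ F x + inner ℝ (gradient F x) (y - x) + (β / 2) * ‖y - x‖ ^ 2)
    (hmin : ∀ x, fstar ≤ F x)
    (hPL : ∀ x, μ * (F x - fstar) ≤ (1 / 2) * ‖gradient F x‖ ^ 2)
    (p : ℝ)
    (hp : p = ((k - ℓ).choose r : ℝ) / (k.choose r : ℝ))
    (x0 : EuclideanSpace ℝ (Fin d))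
    (X : (ℕ → Finset (Fin k)) → ℕ → EuclideanSpace ℝ (Fin d))
    (hX : X = fun ω => traj x0 (fun S x => x - ((1 - p) / β) • ((1 - p)⁻¹ •
        ((1 / (n : ℝ)) • ∑ i : Fin (n / c),
          (if (S ∩ W i).Nonempty then (1 : ℝ) else 0) •
            ∑ j : Fin c, gradient (f (taskIdx n c hc i j)) x)) ) ω)
    (ΔT : ℝ)
    (hΔT : ΔT = (∑ ω ∈ Fintype.piFinset
          (fun _ : Fin T => Finset.powersetCard r (Finset.univ : Finset (Fin k))),
        (F (X (fun t => if h : t < T then ω ⟨t, h⟩ else ∅) T) - fstar))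
      / ((k.choose r : ℝ)) ^ T) :
    ΔT ≤ (1 - (1 - Real.exp (-(c * r : ℝ) / (n : ℝ))) * μ / β) ^ T * (F x0 - fstar)
      + 2 * c * Real.exp (-(c * r : ℝ) / (n : ℝ)) * σ ^ 2 / (μ * n) := by
  set ε := exp (-(c * r : ℝ) / n)
  have hβ : 0 < β := hμ.trans_le hβμ
  have hε0 : 0 ≤ ε := (exp_pos _).le
  have hε : ε ≤ 1 / 2 := exp_neg_mul_div_le_half (by positivity) (by positivity) hcr
  have hpε : p ≤ ε := hp ▸ choose_sub_div_choose_le_exp_of_mul_eq hn hc hrpos hr hℓ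
  have hρ : 0 ≤ 1 - (1 - ε) * μ / β := by rw [sub_nonneg, div_le_one hβ]; nlinarith
  have hstepSize (w : EuclideanSpace ℝ (Fin d)) : ((1 - p) / β) • ((1 - p)⁻¹ • w) = β⁻¹ • w := by
    rw [smul_smul]
    field_simp [show 1 - p ≠ 0 by linarith]
  subst hX
  simp only [hstepSize] at hΔT
  have hΩ : (powersetCard r (univ : Finset (Fin k))).Nonempty := by simpa using hr
  have hcard : (k.choose r : ℝ) ^ T
      = #(Fintype.piFinset fun _ : Fin T => powersetCard r (univ : Finset (Fin k))) := by simp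
  rw [hΔT, hcard, ← expect_eq_sum_div_card]
  refine (expect_traj_le x0 _ _ hΩ (fun y => F y - fstar) hρ
    (C := 2 * ε * (c * σ ^ 2 / n) / μ) (by positivity) (fun x => ?_) T).trans_eq
    (by ring)
  refine (expect_sub_erasureHead_step_le hWcard hWdisj hr (Nat.div_mul_cancel hc) (σ := σ)
    hβ hp ?_ (fun i => ?_) (hsmooth x) (hPL x)).trans
    (erasure_step_bound_mono (N := c * σ ^ 2 / n) hpε hε0 hε hμ hβ (sub_nonneg.2 (hmin x))
      (by positivity))
  · rw [hF, gradient_const_mul_sum fun i => (hdiff i).differentiableAt, sum_taskIdx hc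
      fun t => gradient (f t) x]
  · exact (norm_sum_le _ _).trans
      (by simpa using sum_le_sum (s := univ) fun j _ => hσ (taskIdx n c hc i j) x)

/-- Convergence of ErasureHead with step size `γ = (1-p)/β` on a `β`-smooth, `μ`-PL function,
when `c ≥ n ln(2)/r`: `Δ_T ≤ (1-(1-e^{-cr/n})μ/β)^T Δ_0 + 2c e^{-cr/n}σ²/(μn)`. -/
theorem erasurehead_convergence_exp_bound_step_one_sub_p_over_beta
    {d n k c r ℓ T : ℕ} (hn : 0 < n) (hc : c ∣ n) (hrpos : 0 < r)
    (hr : r ≤ k) (hℓ : n * ℓ = k * c) (h2ℓ : 2 * ℓ ≤ k)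
    (hcr : (c : ℝ) ≥ (n : ℝ) * Real.log 2 / (r : ℝ))
    (W : Fin (n / c) → Finset (Fin k))
    (hWcard : ∀ i, (W i).card = ℓ)
    (hWdisj : ∀ i j, i ≠ j → Disjoint (W i) (W j))
    (f : Fin n → EuclideanSpace ℝ (Fin d) → ℝ)
    (hdiff : ∀ i, Differentiable ℝ (f i))
    (σ β μ fstar : ℝ) (hμ : 0 < μ) (hβμ : μ ≤ β)
    (hσ : ∀ i x, ‖gradient (f i) x‖ ≤ σ)
    (F : EuclideanSpace ℝ (Fin d) → ℝ)
    (hF : F = fun y => (1 / (n : ℝ)) * ∑ i, f i y)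
    (hsmooth : ∀ x y, F y ≤ F x + inner ℝ (gradient F x) (y - x) + (β / 2) * ‖y - x‖ ^ 2)
    (hmin : ∀ x, fstar ≤ F x) (hattain : ∃ x, F x = fstar)
    (hPL : ∀ x, μ * (F x - fstar) ≤ (1 / 2) * ‖gradient F x‖ ^ 2)
    (p : ℝ)
    (hp : p = ((k - ℓ).choose r : ℝ) / (k.choose r : ℝ))
    (x0 : EuclideanSpace ℝ (Fin d))
    (X : (ℕ → Finset (Fin k)) → ℕ → EuclideanSpace ℝ (Fin d))
    (hX : X = fun ω => traj x0 (fun S x => x - ((1 - p) / β) • ((1 - p)⁻¹ •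
        ((1 / (n : ℝ)) • ∑ i : Fin (n / c),
          (if (S ∩ W i).Nonempty then (1 : ℝ) else 0) •
            ∑ j : Fin c, gradient (f (taskIdx n c hc i j)) x)) ) ω)
    (ΔT : ℝ)
    (hΔT : ΔT = (∑ ω ∈ Fintype.piFinset
          (fun _ : Fin T => Finset.powersetCard r (Finset.univ : Finset (Fin k))),
        (F (X (fun t => if h : t < T then ω ⟨t, h⟩ else ∅) T) - fstar))
      / ((k.choose r : ℝ)) ^ T) :
    ΔT ≤ (1 - (1 - Real.exp (-(c * r : ℝ) / (n : ℝ))) * μ / β) ^ T * (F x0 - fstar)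
      + 2 * c * Real.exp (-(c * r : ℝ) / (n : ℝ)) * σ ^ 2 / (μ * n) :=
  erasurehead_convergence_exp_bound_step_one_sub_p_over_beta_general hn hc hrpos hr hℓ hcr W hWcard
    hWdisj f hdiff σ β μ fstar hμ hβμ hσ F hF hsmooth hmin hPL p hp x0 X hX ΔT hΔT
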